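/- Let x ∈ ℝⁿ and define the n×n symmetric matrix Θ_x by (Θ_x)_{ij} = (x_i + x_j)/(2n) for i ≠ j and (Θ_x)_{ii} = −Σ_{k≠i}(Θ_x)_{ik}. Then for any symmetric norm ‖·‖ on ℝⁿ and any y ∈ ℝⁿ, ‖(Θ_x − n^{−1} 𝟙⊗x) y‖ ≤ ‖ |x|^↓ ⊙ |y|^↓ ‖, where ⊙ denotes coordinatewise product. -/

import Mathlib

open Finset

/-- `dsort x i` is the `i`-th entry of the non-increasing rearrangement of `|x|`. -/
noncomputable def dsort {n : ℕ} (x : Fin n → ℝ) : Fin n → ℝ :=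
  fun i => |x (Tuple.sort (fun j => |x j|) i.rev)|

/-- The matrix `Θ_x`: off-diagonal entries `(x_i + x_j)/(2n)`, diagonal entries
chosen so that all row sums vanish. -/
noncomputable def Theta {n : ℕ} (x : Fin n → ℝ) : Matrix (Fin n) (Fin n) ℝ :=
  Matrix.of fun i j =>
    if i = j then -∑ l ∈ Finset.univ.erase i, (x i + x l) / (2 * n)
    else (x i + x j) / (2 * n)

/-!
Write `w = (Θ_x − n⁻¹ 𝟙⊗x) y`; then `2n wᵢ = ∑ⱼ (xᵢyⱼ − xⱼyᵢ − xᵢyᵢ − xⱼyⱼ)`. Bounding the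
terms of `∑_{i ∈ S} ∑ⱼ` pairwise by the two-term rearrangement inequality gives an expression in
`|x|` and `|y|` built from `max` and `min`; it is additive under the layer-cake decomposition of
`|x|` and of `|y|`, so comparing it with `2n ∑_{t < #S} |x|↓ₜ |y|↓ₜ` reduces to 0/1 vectors, where
it is a count. Hence `|w|` is weakly majorized by `|x|↓ ⊙ |y|↓`. By Abel summation and
Hahn–Banach, `w` then lies in the convex hull of the signed permutations of `|x|↓ ⊙ |y|↓`, and a
symmetric norm is bounded on that hull by its value at `|x|↓ ⊙ |y|↓`.
-/

section

variable {α : Type*} [CommRing α] [LinearOrder α] [IsStrictOrderedRing α]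

theorem abs_sub_add_abs_add (u v : α) : |u - v| + |u + v| = 2 * max |u| |v| := by
  rcases le_total 0 (u - v) with h₁ | h₁ <;> rcases le_total 0 (u + v) with h₂ | h₂ <;>
    rcases le_total 0 u with h₃ | h₃ <;> rcases le_total 0 v with h₄ | h₄ <;>
    simp only [abs_of_nonneg, abs_of_nonpos, h₁, h₂, h₃, h₄] <;>
    first
    | rw [max_eq_left (by linarith)]; linarith
    | rw [max_eq_right (by linarith)]; linarith

theorem mul_add_mul_le_max_mul_max_add_min_mul_min (p q r s : α) :
    p * r + q * s ≤ max p q * max r s + min p q * min r s := by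
  rcases le_total p q with h | h <;> rcases le_total r s with h' | h' <;>
    simp only [max_eq_left, max_eq_right, min_eq_left, min_eq_right, h, h'] <;>
    nlinarith [mul_nonneg (sub_nonneg.2 h) (sub_nonneg.2 h')]

theorem sum_sum_add_eq {ι R : Type*} [CommSemiring R] (S T : Finset ι) (f : ι → R) :
    ∑ i ∈ S, ∑ j ∈ T, (f i + f j) = #T * ∑ i ∈ S, f i + #S * ∑ j ∈ T, f j := by
  simp only [sum_add_distrib, sum_const, nsmul_eq_mul, ← mul_sum]

theorem sum_mul_nonneg_of_antitone_of_sum_Iic_nonneg :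
    ∀ {n : ℕ} {c D : Fin n → α}, Antitone c → (∀ t, 0 ≤ c t) →
      (∀ t, 0 ≤ ∑ s ∈ Iic t, D s) → 0 ≤ ∑ t, c t * D t
  | 0, _, _, _, _, _ => by simp
  | n + 1, c, D, hc, hc0, hD => by
    -- Peel off the constant `c (last n)`; what remains vanishes at the last index.
    have hrest : 0 ≤ ∑ t : Fin n, (c t.castSucc - c (Fin.last n)) * D t.castSucc := by
      refine sum_mul_nonneg_of_antitone_of_sum_Iic_nonneg
        (fun s t hst => sub_le_sub_right (hc (Fin.castSucc_le_castSucc_iff.2 hst)) _)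
        (fun t => sub_nonneg.2 (hc (Fin.le_last _))) (fun t => ?_)
      rw [← sum_image (fun _ _ _ _ h => Fin.castSucc_injective n h),
        Fin.finsetImage_castSucc_Iic]
      exact hD t.castSucc
    have htotal : 0 ≤ ∑ t, D t := by
      have hlast : Iic (Fin.last n) = univ := by ext t; simp [Fin.le_last]
      simpa only [hlast] using hD (Fin.last n)
    have hsplit : ∑ t, c t * D t = ∑ t : Fin n, (c t.castSucc - c (Fin.last n)) * D t.castSucc
        + c (Fin.last n) * ∑ t, D t := by
      simp only [Fin.sum_univ_castSucc, sub_mul, sum_sub_distrib, mul_add, mul_sum]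
      ring
    rw [hsplit]
    exact add_nonneg hrest (mul_nonneg (hc0 _) htotal)

theorem sum_le_of_antitone_of_nonpos {n : ℕ} {u : Fin n → α} (hu : Antitone u)
    (hu1 : ∀ s, u s ≤ 1) {t : Fin n} (ht : u t ≤ 0) : ∑ s, u s ≤ (t : ℕ) := by
  calc ∑ s, u s ≤ ∑ s : Fin n, if (s : ℕ) < t then (1 : α) else 0 := by
        refine sum_le_sum fun s _ => ?_
        split_ifs with hst
        · exact hu1 s
        · exact (hu (Fin.le_def.2 (not_lt.1 hst))).trans ht
    _ ≤ (t : ℕ) := by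
        rw [sum_boole, Fin.card_filter_val_lt]
        exact_mod_cast min_le_right _ _

end

section

variable {n : ℕ}

noncomputable def sortPerm (u : Fin n → ℝ) : Equiv.Perm (Fin n) :=
  Fin.revPerm.trans (Tuple.sort fun j => |u j|)

theorem dsort_apply (u : Fin n → ℝ) (t : Fin n) : dsort u t = |u (sortPerm u t)| := rfl

theorem dsort_nonneg (u : Fin n → ℝ) (t : Fin n) : 0 ≤ dsort u t := abs_nonneg _

theorem dsort_antitone (u : Fin n → ℝ) : Antitone (dsort u) := fun _ _ hst => by
  simpa [dsort] using Tuple.monotone_sort (fun j => |u j|) (Fin.rev_le_rev.2 hst)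

theorem eq_dsort_of_antitone {u v : Fin n → ℝ} (τ : Equiv.Perm (Fin n))
    (hv : ∀ t, v t = |u (τ t)|) (hanti : Antitone v) : dsort u = v := by
  have hmono : Monotone ((fun j => |u j|) ∘ (Fin.revPerm.trans τ)) := fun s t hst => by
    simpa [hv] using hanti (Fin.rev_le_rev.2 hst)
  have h := Tuple.unique_monotone hmono (Tuple.monotone_sort fun j => |u j|)
  funext t
  simpa [dsort, hv] using (congrFun h t.rev).symm

theorem dsort_abs (u : Fin n → ℝ) : dsort (fun i => |u i|) = dsort u := by
  unfold dsort
  simp only [abs_abs]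

theorem sum_dsort (u : Fin n → ℝ) : ∑ t, dsort u t = ∑ i, |u i| :=
  Equiv.sum_comp (sortPerm u) fun i => |u i|

theorem dsort_comp_of_monotone {f : ℝ → ℝ} (hf : Monotone f) (hf0 : 0 ≤ f 0)
    {a : Fin n → ℝ} (ha : 0 ≤ a) : dsort (f ∘ a) = f ∘ dsort a := by
  refine eq_dsort_of_antitone (sortPerm a) (fun t => ?_) (hf.comp_antitone (dsort_antitone a))
  simp only [Function.comp_apply, dsort_apply, abs_of_nonneg (ha _)]
  exact (abs_of_nonneg (hf0.trans (hf (ha _)))).symm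

theorem sum_abs_mul_abs_le_sum_dsort_mul_dsort (z w : Fin n → ℝ) :
    ∑ i, |z i| * |w i| ≤ ∑ t, dsort z t * dsort w t := by
  calc ∑ i, |z i| * |w i|
      = ∑ t, dsort z t * dsort w (((sortPerm z).trans (sortPerm w).symm) t) := by
        rw [← Equiv.sum_comp (sortPerm z)]
        simp [dsort_apply]
    _ ≤ ∑ t, dsort z t * dsort w t :=
        ((dsort_antitone z).monovary (dsort_antitone w)).sum_mul_comp_perm_le_sum_mul

theorem dsort_eq_one_of_lt_sum {a : Fin n → ℝ} (ha : ∀ i, a i = 0 ∨ a i = 1) {t : Fin n}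
    (ht : ((t : ℕ) : ℝ) < ∑ i, a i) : dsort a t = 1 := by
  have hbin : dsort a t = 0 ∨ dsort a t = 1 := by
    rcases ha (sortPerm a t) with h | h <;> simp [dsort_apply, h]
  refine hbin.resolve_left fun h0 => ht.not_ge ?_
  have hle1 : ∀ s, dsort a s ≤ 1 := fun s => by
    rcases ha (sortPerm a s) with h | h <;> simp [dsort_apply, h]
  have hsum : ∑ i, a i = ∑ s, dsort a s := by
    rw [sum_dsort]
    refine sum_congr rfl fun i _ => ?_
    rcases ha i with h | h <;> simp [h]
  rw [hsum]
  exact sum_le_of_antitone_of_nonpos (dsort_antitone a) hle1 h0.le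

theorem sum_mul_le_sum_dsort_mul_of_sum_Iic_le {w d : Fin n → ℝ}
    (hwd : ∀ t, ∑ s ∈ Iic t, dsort w s ≤ ∑ s ∈ Iic t, d s) (z : Fin n → ℝ) :
    ∑ i, z i * w i ≤ ∑ t, dsort z t * d t := by
  have habel : 0 ≤ ∑ t, dsort z t * (d t - dsort w t) :=
    sum_mul_nonneg_of_antitone_of_sum_Iic_nonneg (dsort_antitone z) (dsort_nonneg z)
      fun t => by simpa [sum_sub_distrib] using hwd t
  calc ∑ i, z i * w i ≤ ∑ i, |z i| * |w i| :=
        sum_le_sum fun i _ => (le_abs_self _).trans (abs_mul _ _).le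
    _ ≤ ∑ t, dsort z t * dsort w t := sum_abs_mul_abs_le_sum_dsort_mul_dsort z w
    _ ≤ ∑ t, dsort z t * d t := by
        simp only [mul_sub, sum_sub_distrib] at habel
        linarith

def signedPerms (d : Fin n → ℝ) : Set (Fin n → ℝ) :=
  Set.range fun p : (Fin n → ℤˣ) × Equiv.Perm (Fin n) => fun i => ((p.1 i : ℤ) : ℝ) * d (p.2 i)

theorem mem_convexHull_signedPerms {w d : Fin n → ℝ}
    (h : ∀ z, ∑ i, z i * w i ≤ ∑ t, dsort z t * d t) : w ∈ convexHull ℝ (signedPerms d) := by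
  by_contra hw
  obtain ⟨f, u, hfu, huw⟩ := geometric_hahn_banach_closed_point (convex_convexHull ℝ _)
    ((Set.finite_range _).isCompact_convexHull (𝕜 := ℝ)).isClosed hw
  set z : Fin n → ℝ := fun i => f (Pi.single i 1)
  have hf : ∀ v, f v = ∑ i, z i * v i := fun v => by
    conv_lhs => rw [← univ_sum_single v]
    rw [map_sum]
    refine sum_congr rfl fun i _ => ?_
    rw [mul_comm, ← smul_eq_mul, ← map_smul, ← Pi.single_smul', smul_eq_mul, mul_one]
  -- The signed permutation of `d` aligned with `z` is where `f` is largest.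
  set ε : Fin n → ℤˣ := fun i => if z i < 0 then -1 else 1
  set σ := (sortPerm z).symm
  have hv : (fun i => ((ε i : ℤ) : ℝ) * d (σ i)) ∈ signedPerms d := ⟨(ε, σ), rfl⟩
  have hfv : f (fun i => ((ε i : ℤ) : ℝ) * d (σ i)) = ∑ t, dsort z t * d t := by
    rw [hf, ← Equiv.sum_comp (sortPerm z)]
    refine sum_congr rfl fun t _ => ?_
    simp only [dsort_apply, ε, σ, Equiv.symm_apply_apply]
    split_ifs with hz
    · rw [abs_of_neg hz]; push_cast; ring
    · rw [abs_of_nonneg (not_lt.1 hz)]; push_cast; ring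
  have hlt := hfu _ (subset_convexHull ℝ _ hv)
  rw [hfv] at hlt
  rw [hf] at huw
  linarith [h z]

theorem le_of_mem_convexHull_signedPerms {N : (Fin n → ℝ) → ℝ}
    (hN_add : ∀ a b, N (a + b) ≤ N a + N b) (hN_smul : ∀ (c : ℝ) a, N (c • a) = |c| * N a)
    (hN_perm : ∀ (σ : Equiv.Perm (Fin n)) a, N (a ∘ σ) = N a)
    (hN_sign : ∀ (ε a : Fin n → ℝ), (∀ i, ε i = 1 ∨ ε i = -1) → N (fun i => ε i * a i) = N a)
    {d v : Fin n → ℝ} (hv : v ∈ convexHull ℝ (signedPerms d)) : N v ≤ N d := by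
  have hconv : Convex ℝ {v | N v ≤ N d} := fun v₁ h₁ v₂ h₂ s t hs ht hst => by
    calc N (s • v₁ + t • v₂) ≤ s * N v₁ + t * N v₂ := by
          simpa [hN_smul, abs_of_nonneg hs, abs_of_nonneg ht] using hN_add (s • v₁) (t • v₂)
      _ ≤ s * N d + t * N d := by gcongr <;> assumption
      _ = N d := by rw [← add_mul, hst, one_mul]
  refine convexHull_min ?_ hconv hv
  rintro _ ⟨⟨ε, σ⟩, rfl⟩
  refine (hN_sign _ (d ∘ σ) fun i => ?_).trans (hN_perm σ d) |>.le
  rcases Int.units_eq_one_or (ε i) with h | h <;> simp [h]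

theorem le_of_sum_Iic_dsort_le {N : (Fin n → ℝ) → ℝ}
    (hN_add : ∀ a b, N (a + b) ≤ N a + N b) (hN_smul : ∀ (c : ℝ) a, N (c • a) = |c| * N a)
    (hN_perm : ∀ (σ : Equiv.Perm (Fin n)) a, N (a ∘ σ) = N a)
    (hN_sign : ∀ (ε a : Fin n → ℝ), (∀ i, ε i = 1 ∨ ε i = -1) → N (fun i => ε i * a i) = N a)
    {w d : Fin n → ℝ} (hwd : ∀ t, ∑ s ∈ Iic t, dsort w s ≤ ∑ s ∈ Iic t, d s) : N w ≤ N d :=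
  le_of_mem_convexHull_signedPerms hN_add hN_smul hN_perm hN_sign
    (mem_convexHull_signedPerms (sum_mul_le_sum_dsort_mul_of_sum_Iic_le hwd))

def thetaKernel (x y : Fin n → ℝ) (i j : Fin n) : ℝ :=
  x i * y j - x j * y i - x i * y i - x j * y j

theorem Theta_apply (x : Fin n → ℝ) (i j : Fin n) :
    Theta x i j = (x i + x j) / (2 * n) - if i = j then ∑ l, (x i + x l) / (2 * n) else 0 := by
  by_cases hij : i = j
  · subst hij
    simp only [Theta, Matrix.of_apply, if_true, ← add_sum_erase univ _ (mem_univ i)]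
    ring
  · simp [Theta, hij]

theorem Theta_sub_mulVec_apply (x y : Fin n → ℝ) (i : Fin n) :
    (Theta x - Matrix.of fun _ j => x j / n).mulVec y i = (∑ j, thetaKernel x y i j) / (2 * n) := by
  have hn : (n : ℝ) ≠ 0 := Nat.cast_ne_zero.2 i.pos.ne'
  simp only [Matrix.mulVec, dotProduct, Matrix.sub_apply, Matrix.of_apply, Theta_apply, sub_mul,
    ite_mul, zero_mul, sum_sub_distrib, sum_ite_eq, mem_univ, if_true, sum_mul, sum_div]
  rw [← sum_sub_distrib, ← sum_sub_distrib]
  refine sum_congr rfl fun j _ => ?_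
  field_simp
  simp only [thetaKernel]
  ring

theorem abs_thetaKernel_add_abs_thetaKernel_le (x y : Fin n → ℝ) (i j : Fin n) :
    |thetaKernel x y i j| + |thetaKernel x y j i| ≤
      2 * (max |x i| |x j| * max |y i| |y j| + min |x i| |x j| * min |y i| |y j|) := by
  have hu : |x i * y j - x j * y i| ≤
      max |x i| |x j| * max |y i| |y j| + min |x i| |x j| * min |y i| |y j| := by
    refine (abs_sub _ _).trans ?_
    rw [abs_mul, abs_mul, max_comm |y i|, min_comm |y i|]
    exact mul_add_mul_le_max_mul_max_add_min_mul_min _ _ _ _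
  have hv : |x i * y i + x j * y j| ≤
      max |x i| |x j| * max |y i| |y j| + min |x i| |x j| * min |y i| |y j| := by
    refine (abs_add_le _ _).trans ?_
    rw [abs_mul, abs_mul]
    exact mul_add_mul_le_max_mul_max_add_min_mul_min _ _ _ _
  have hK : thetaKernel x y i j = (x i * y j - x j * y i) - (x i * y i + x j * y j) := by
    simp only [thetaKernel]; ring
  have hK' : thetaKernel x y j i = -((x i * y j - x j * y i) + (x i * y i + x j * y j)) := by
    simp only [thetaKernel]; ring
  rw [hK, hK', abs_neg, abs_sub_add_abs_add]
  exact mul_le_mul_of_nonneg_left (max_le hu hv) zero_le_two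

theorem abs_thetaKernel_le (x y : Fin n → ℝ) (i j : Fin n) :
    |thetaKernel x y i j| ≤ 2 * (max |x i| |x j| * max |y i| |y j|) := by
  have hK : thetaKernel x y i j = x i * (y j - y i) - x j * (y j + y i) := by
    simp only [thetaKernel]; ring
  have hy : |y j - y i| + |y j + y i| ≤ 2 * max |y i| |y j| := by
    rw [abs_sub_add_abs_add, max_comm]
  calc |thetaKernel x y i j| ≤ |x i| * |y j - y i| + |x j| * |y j + y i| := by
        rw [hK, ← abs_mul, ← abs_mul]; exact abs_sub _ _
    _ ≤ max |x i| |x j| * (|y j - y i| + |y j + y i|) := by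
        rw [mul_add]
        gcongr
        exacts [le_max_left _ _, le_max_right _ _]
    _ ≤ max |x i| |x j| * (2 * max |y i| |y j|) := by gcongr
    _ = 2 * (max |x i| |x j| * max |y i| |y j|) := by ring

def maxMinSum (S : Finset (Fin n)) (a b : Fin n → ℝ) : ℝ :=
  ∑ i ∈ S, ∑ j ∈ S, (max (a i) (a j) * max (b i) (b j) + min (a i) (a j) * min (b i) (b j)) +
    2 * ∑ i ∈ S, ∑ j ∈ Sᶜ, max (a i) (a j) * max (b i) (b j)

noncomputable def sortedProdSum (k : ℕ) (a b : Fin n → ℝ) : ℝ :=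
  ∑ t ∈ {t : Fin n | (t : ℕ) < k}, dsort a t * dsort b t

theorem sum_abs_sum_thetaKernel_le (x y : Fin n → ℝ) (S : Finset (Fin n)) :
    ∑ i ∈ S, |∑ j, thetaKernel x y i j| ≤ maxMinSum S (fun i => |x i|) (fun i => |y i|) := by
  have hin : ∑ i ∈ S, ∑ j ∈ S, |thetaKernel x y i j| ≤ ∑ i ∈ S, ∑ j ∈ S,
      (max |x i| |x j| * max |y i| |y j| + min |x i| |x j| * min |y i| |y j|) := by
    have hsymm : 2 * ∑ i ∈ S, ∑ j ∈ S, |thetaKernel x y i j| =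
        ∑ i ∈ S, ∑ j ∈ S, (|thetaKernel x y i j| + |thetaKernel x y j i|) := by
      rw [two_mul]
      nth_rewrite 2 [sum_comm]
      simp only [sum_add_distrib]
    have hpair := sum_le_sum fun i (_ : i ∈ S) => sum_le_sum fun j (_ : j ∈ S) =>
      abs_thetaKernel_add_abs_thetaKernel_le x y i j
    simp only [← mul_sum, ← hsymm] at hpair
    linarith
  have hout : ∑ i ∈ S, ∑ j ∈ Sᶜ, |thetaKernel x y i j| ≤
      2 * ∑ i ∈ S, ∑ j ∈ Sᶜ, max |x i| |x j| * max |y i| |y j| := by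
    simp only [mul_sum]
    exact sum_le_sum fun i _ => sum_le_sum fun j _ => abs_thetaKernel_le x y i j
  calc ∑ i ∈ S, |∑ j, thetaKernel x y i j| ≤ ∑ i ∈ S, ∑ j, |thetaKernel x y i j| :=
        sum_le_sum fun i _ => abs_sum_le_sum_abs _ _
    _ = ∑ i ∈ S, ∑ j ∈ S, |thetaKernel x y i j| + ∑ i ∈ S, ∑ j ∈ Sᶜ, |thetaKernel x y i j| := by
        rw [← sum_add_distrib]
        exact sum_congr rfl fun i _ => (sum_add_sum_compl S _).symm
    _ ≤ maxMinSum S (fun i => |x i|) (fun i => |y i|) := add_le_add hin hout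

theorem maxMinSum_comm (S : Finset (Fin n)) (a b : Fin n → ℝ) :
    maxMinSum S a b = maxMinSum S b a := by
  simp only [maxMinSum, mul_comm (max (a _) (a _)), mul_comm (min (a _) (a _))]

theorem sortedProdSum_comm (k : ℕ) (a b : Fin n → ℝ) :
    sortedProdSum k a b = sortedProdSum k b a := by
  simp only [sortedProdSum, mul_comm (dsort a _)]

theorem maxMinSum_smul_left {c : ℝ} (hc : 0 ≤ c) (S : Finset (Fin n)) (a b : Fin n → ℝ) :
    maxMinSum S (c • a) b = c * maxMinSum S a b := by
  simp only [maxMinSum, Pi.smul_apply, smul_eq_mul, ← mul_max_of_nonneg _ _ hc,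
    ← mul_min_of_nonneg _ _ hc, mul_add, mul_sum, mul_assoc, mul_left_comm c (2 : ℝ)]

theorem sortedProdSum_smul_left {c : ℝ} (hc : 0 ≤ c) (k : ℕ) {a : Fin n → ℝ} (ha : 0 ≤ a)
    (b : Fin n → ℝ) : sortedProdSum k (c • a) b = c * sortedProdSum k a b := by
  have h := dsort_comp_of_monotone (monotone_mul_left_of_nonneg hc) (by simp) ha
  simp only [sortedProdSum, show c • a = (c * ·) ∘ a from rfl, h, mul_sum, Function.comp_apply,
    mul_assoc]

theorem maxMinSum_eq_add_of_monotone {f g : ℝ → ℝ} (hf : Monotone f) (hg : Monotone g)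
    (hfg : ∀ x, f x + g x = x) (S : Finset (Fin n)) (a b : Fin n → ℝ) :
    maxMinSum S a b = maxMinSum S (f ∘ a) b + maxMinSum S (g ∘ a) b := by
  have hmax : ∀ p q, max p q = max (f p) (f q) + max (g p) (g q) := fun p q => by
    rw [← hf.map_max, ← hg.map_max, hfg]
  have hmin : ∀ p q, min p q = min (f p) (f q) + min (g p) (g q) := fun p q => by
    rw [← hf.map_min, ← hg.map_min, hfg]
  have e₁ : ∀ i j, max (a i) (a j) * max (b i) (b j) =
      max (f (a i)) (f (a j)) * max (b i) (b j) + max (g (a i)) (g (a j)) * max (b i) (b j) :=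
    fun i j => by rw [hmax, add_mul]
  have e₂ : ∀ i j, min (a i) (a j) * min (b i) (b j) =
      min (f (a i)) (f (a j)) * min (b i) (b j) + min (g (a i)) (g (a j)) * min (b i) (b j) :=
    fun i j => by rw [hmin, add_mul]
  simp only [maxMinSum, Function.comp_apply, e₁, e₂, sum_add_distrib]
  ring

theorem sortedProdSum_eq_add_of_monotone {f g : ℝ → ℝ} (hf : Monotone f) (hg : Monotone g)
    (hf0 : 0 ≤ f 0) (hg0 : 0 ≤ g 0) (hfg : ∀ x, f x + g x = x) (k : ℕ) {a : Fin n → ℝ}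
    (ha : 0 ≤ a) (b : Fin n → ℝ) :
    sortedProdSum k a b = sortedProdSum k (f ∘ a) b + sortedProdSum k (g ∘ a) b := by
  simp only [sortedProdSum, dsort_comp_of_monotone hf hf0 ha, dsort_comp_of_monotone hg hg0 ha,
    ← sum_add_distrib, Function.comp_apply, ← add_mul, hfg]

/-- Truncating at the least positive entry `s` leaves `s` times an indicator vector plus a
vector of smaller support. -/
theorem induction_on_layers {ι : Type*} [Fintype ι] {P : (ι → ℝ) → Prop}
    (indicator : ∀ s : ℝ, 0 < s → ∀ χ : ι → ℝ, (∀ i, χ i = 0 ∨ χ i = 1) → P (s • χ))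
    (truncate : ∀ a, 0 ≤ a → ∀ s, 0 < s →
      P (fun i => min (a i) s) → P (fun i => max (a i - s) 0) → P a)
    {a : ι → ℝ} (ha : 0 ≤ a) : P a := by
  induction hk : #{i | a i ≠ 0} using Nat.strong_induction_on generalizing a with
  | _ k ih =>
  by_cases h0 : a = 0
  · simpa [h0] using indicator 1 one_pos 0 fun _ => Or.inl rfl
  obtain ⟨i, hi, hmin⟩ := exists_min_image {i | a i ≠ 0} a
    (by simpa [Finset.Nonempty, funext_iff] using h0)
  have hi : a i ≠ 0 := (mem_filter.1 hi).2
  have hs : 0 < a i := (ha i).lt_of_ne' hi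
  have hle : ∀ j, a j ≠ 0 → a i ≤ a j := fun j hj => hmin j (mem_filter.2 ⟨mem_univ _, hj⟩)
  refine truncate a ha (a i) hs ?_ (ih _ ?_ (fun j => le_max_right _ _) rfl)
  · have hχ : (fun j => min (a j) (a i)) = a i • fun j => if a j = 0 then 0 else 1 := by
      funext j
      by_cases hj : a j = 0
      · simp [hj, hs.le]
      · simp [hj, hle j hj]
    rw [hχ]
    exact indicator _ hs _ fun j => by split_ifs <;> simp
  · rw [← hk]
    refine card_lt_card (ssubset_iff_of_subset (fun j => ?_) |>.2 ⟨i, by simp [hi], by simp⟩)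
    simp only [mem_filter, mem_univ, true_and]
    contrapose!
    intro hj
    simp [hj, hs.le]

theorem maxMinSum_le_of_forall_binary {S : Finset (Fin n)} {b : Fin n → ℝ}
    (hbin : ∀ χ : Fin n → ℝ, (∀ i, χ i = 0 ∨ χ i = 1) →
      maxMinSum S χ b ≤ 2 * n * sortedProdSum #S χ b)
    {a : Fin n → ℝ} (ha : 0 ≤ a) : maxMinSum S a b ≤ 2 * n * sortedProdSum #S a b := by
  refine induction_on_layers (P := fun a => maxMinSum S a b ≤ 2 * n * sortedProdSum #S a b)
    (fun s hs χ hχ => ?_) (fun a ha s hs hlow hhigh => ?_) ha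
  · have hχ0 : 0 ≤ χ := fun i => by rcases hχ i with h | h <;> simp [h]
    rw [maxMinSum_smul_left hs.le, sortedProdSum_smul_left hs.le _ hχ0, mul_left_comm]
    exact mul_le_mul_of_nonneg_left (hbin χ hχ) hs.le
  · have hf : Monotone fun x : ℝ => min x s := fun _ _ h => min_le_min_right s h
    have hg : Monotone fun x : ℝ => max (x - s) 0 := fun _ _ h =>
      max_le_max_right 0 (sub_le_sub_right h s)
    have hfg : ∀ x : ℝ, min x s + max (x - s) 0 = x := fun x => by
      rcases le_total x s with h | h
      · simp [h, sub_nonpos.2 h]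
      · simp [h, sub_nonneg.2 h]
    rw [maxMinSum_eq_add_of_monotone hf hg hfg,
      sortedProdSum_eq_add_of_monotone hf hg (by simp [hs.le]) (le_max_right _ _) hfg _ ha]
    simp only [Function.comp_def]
    linarith

theorem cast_card_add_card_compl (S : Finset (Fin n)) : (#S : ℝ) + #Sᶜ = n := by
  exact_mod_cast (card_add_card_compl S).trans (Fintype.card_fin n)

theorem maxMinSum_le_sum_left {S : Finset (Fin n)} {a b : Fin n → ℝ} (ha : 0 ≤ a)
    (hb1 : ∀ i, b i ≤ 1) : maxMinSum S a b ≤ 2 * n * ∑ i, a i := by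
  have hmax : ∀ i j, max (a i) (a j) * max (b i) (b j) ≤ max (a i) (a j) := fun i j =>
    mul_le_of_le_one_right (le_max_of_le_left (ha i)) (max_le (hb1 i) (hb1 j))
  have hmin : ∀ i j, min (a i) (a j) * min (b i) (b j) ≤ min (a i) (a j) := fun i j =>
    mul_le_of_le_one_right (le_min (ha i) (ha j)) (min_le_of_left_le (hb1 i))
  have hin : ∀ i j, max (a i) (a j) * max (b i) (b j) + min (a i) (a j) * min (b i) (b j) ≤
      a i + a j := fun i j => by linarith [hmax i j, hmin i j, max_add_min (a i) (a j)]
  have hout : ∀ i j, max (a i) (a j) * max (b i) (b j) ≤ a i + a j := fun i j =>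
    (hmax i j).trans (max_le_add_of_nonneg (ha i) (ha j))
  have hS := cast_card_add_card_compl S
  have hSn : (#S : ℝ) ≤ n := by linarith [Nat.cast_nonneg (α := ℝ) #Sᶜ]
  have hSc : 0 ≤ ∑ i ∈ Sᶜ, a i := sum_nonneg fun i _ => ha i
  calc maxMinSum S a b ≤ ∑ i ∈ S, ∑ j ∈ S, (a i + a j) + 2 * ∑ i ∈ S, ∑ j ∈ Sᶜ, (a i + a j) := by
        unfold maxMinSum
        gcongr ?_ + 2 * ?_
        exacts [sum_le_sum fun i _ => sum_le_sum fun j _ => hin i j,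
          sum_le_sum fun i _ => sum_le_sum fun j _ => hout i j]
    _ = 2 * n * ∑ i ∈ S, a i + 2 * #S * ∑ i ∈ Sᶜ, a i := by
        rw [sum_sum_add_eq, sum_sum_add_eq, ← hS]
        ring
    _ ≤ 2 * n * ∑ i, a i := by
        rw [← sum_add_sum_compl S a]
        nlinarith

theorem maxMinSum_le_card {S : Finset (Fin n)} {a b : Fin n → ℝ} (ha1 : ∀ i, a i ≤ 1)
    (hb : 0 ≤ b) (hb1 : ∀ i, b i ≤ 1) : maxMinSum S a b ≤ 2 * n * #S := by
  have hmax : ∀ i j, max (a i) (a j) * max (b i) (b j) ≤ 1 := fun i j =>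
    mul_le_one₀ (max_le (ha1 i) (ha1 j)) (le_max_of_le_left (hb i)) (max_le (hb1 i) (hb1 j))
  have hmin : ∀ i j, min (a i) (a j) * min (b i) (b j) ≤ 1 := fun i j =>
    mul_le_one₀ (min_le_of_left_le (ha1 i)) (le_min (hb i) (hb j)) (min_le_of_left_le (hb1 i))
  have hS := cast_card_add_card_compl S
  calc maxMinSum S a b ≤ ∑ i ∈ S, ∑ j ∈ S, (2 : ℝ) + 2 * ∑ i ∈ S, ∑ j ∈ Sᶜ, (1 : ℝ) := by
        unfold maxMinSum
        gcongr with i _ j _ i _ j _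
        exacts [by linarith [hmax i j, hmin i j], hmax i j]
    _ = 2 * n * #S := by
        simp only [sum_const, nsmul_eq_mul, ← hS]
        ring

theorem sum_eq_card_of_binary {a : Fin n → ℝ} (ha : ∀ i, a i = 0 ∨ a i = 1) :
    ∑ i, a i = #{i | a i = 1} := by
  rw [← sum_boole]
  refine sum_congr rfl fun i _ => ?_
  rcases ha i with h | h <;> simp [h]

theorem le_sortedProdSum_of_binary {a b : Fin n → ℝ} (ha : ∀ i, a i = 0 ∨ a i = 1)
    (hb : ∀ i, b i = 0 ∨ b i = 1) {m k : ℕ} (hmk : m ≤ k) (hmn : m ≤ n)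
    (hma : (m : ℝ) ≤ ∑ i, a i) (hmb : (m : ℝ) ≤ ∑ i, b i) : (m : ℝ) ≤ sortedProdSum k a b := by
  have hone : ∀ t ∈ ({t : Fin n | (t : ℕ) < m} : Finset _), dsort a t * dsort b t = 1 :=
    fun t ht => by
      have ht : ((t : ℕ) : ℝ) < m := by exact_mod_cast (mem_filter.1 ht).2
      rw [dsort_eq_one_of_lt_sum ha (ht.trans_le hma), dsort_eq_one_of_lt_sum hb (ht.trans_le hmb),
        mul_one]
  calc (m : ℝ) = ∑ t ∈ ({t : Fin n | (t : ℕ) < m} : Finset _), dsort a t * dsort b t := by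
        rw [sum_congr rfl hone, sum_const, Fin.card_filter_val_lt, min_eq_right hmn,
          nsmul_eq_mul, mul_one]
    _ ≤ sortedProdSum k a b :=
        sum_le_sum_of_subset_of_nonneg
          (fun t ht => mem_filter.2 ⟨mem_univ t, (mem_filter.1 ht).2.trans_le hmk⟩)
          fun t _ _ => mul_nonneg (dsort_nonneg a t) (dsort_nonneg b t)

theorem maxMinSum_le_of_binary {S : Finset (Fin n)} {a b : Fin n → ℝ}
    (ha : ∀ i, a i = 0 ∨ a i = 1) (hb : ∀ i, b i = 0 ∨ b i = 1) :
    maxMinSum S a b ≤ 2 * n * sortedProdSum #S a b := by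
  have ha0 : 0 ≤ a := fun i => by rcases ha i with h | h <;> simp [h]
  have ha1 : ∀ i, a i ≤ 1 := fun i => by rcases ha i with h | h <;> simp [h]
  have hb0 : 0 ≤ b := fun i => by rcases hb i with h | h <;> simp [h]
  have hb1 : ∀ i, b i ≤ 1 := fun i => by rcases hb i with h | h <;> simp [h]
  set m := min #S (min #{i | a i = 1} #{i | b i = 1})
  have hm : 2 * n * (m : ℝ) =
      min (2 * n * (#S : ℝ)) (min (2 * n * ∑ i, a i) (2 * n * ∑ i, b i)) := by
    simp only [m, sum_eq_card_of_binary ha, sum_eq_card_of_binary hb, Nat.cast_min,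
      mul_min_of_nonneg _ _ (by positivity : (0 : ℝ) ≤ 2 * n)]
  have hsum_b : maxMinSum S a b ≤ 2 * n * ∑ i, b i := by
    rw [maxMinSum_comm]
    exact maxMinSum_le_sum_left hb0 ha1
  have hbound : maxMinSum S a b ≤ 2 * n * m := by
    rw [hm]
    exact le_min (maxMinSum_le_card ha1 hb0 hb1) (le_min (maxMinSum_le_sum_left ha0 hb1) hsum_b)
  refine hbound.trans (mul_le_mul_of_nonneg_left (le_sortedProdSum_of_binary ha hb ?_ ?_ ?_ ?_)
    (by positivity))
  · exact min_le_left _ _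
  · exact (min_le_left _ _).trans (card_le_univ S |>.trans_eq (Fintype.card_fin n))
  · rw [sum_eq_card_of_binary ha]; exact_mod_cast (min_le_right _ _).trans (min_le_left _ _)
  · rw [sum_eq_card_of_binary hb]; exact_mod_cast (min_le_right _ _).trans (min_le_right _ _)

theorem maxMinSum_le {S : Finset (Fin n)} {a b : Fin n → ℝ} (ha : 0 ≤ a) (hb : 0 ≤ b) :
    maxMinSum S a b ≤ 2 * n * sortedProdSum #S a b := by
  refine maxMinSum_le_of_forall_binary (fun χ hχ => ?_) ha
  rw [maxMinSum_comm, sortedProdSum_comm]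
  exact maxMinSum_le_of_forall_binary (fun ψ hψ => maxMinSum_le_of_binary hψ hχ) hb

theorem sum_abs_Theta_sub_mulVec_le (x y : Fin n → ℝ) (hn : 0 < n) (S : Finset (Fin n)) :
    ∑ i ∈ S, |(Theta x - Matrix.of fun _ j => x j / n).mulVec y i| ≤ sortedProdSum #S x y := by
  have h2n : (0 : ℝ) < 2 * n := by positivity
  have hle := (sum_abs_sum_thetaKernel_le x y S).trans
    (maxMinSum_le (fun i => abs_nonneg (x i)) fun i => abs_nonneg (y i))
  have habs : sortedProdSum #S (fun i => |x i|) (fun i => |y i|) = sortedProdSum #S x y := by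
    simp only [sortedProdSum, dsort_abs]
  simp only [Theta_sub_mulVec_apply, abs_div, abs_of_pos h2n, ← sum_div]
  rw [div_le_iff₀ h2n, mul_comm, ← habs]
  exact hle

theorem sum_Iic_dsort_Theta_sub_mulVec_le (x y : Fin n → ℝ) (t : Fin n) :
    ∑ s ∈ Iic t, dsort ((Theta x - Matrix.of fun _ j => x j / n).mulVec y) s ≤
      ∑ s ∈ Iic t, dsort x s * dsort y s := by
  set w := (Theta x - Matrix.of fun _ j => x j / n).mulVec y
  calc ∑ s ∈ Iic t, dsort w s = ∑ i ∈ (Iic t).map (sortPerm w).toEmbedding, |w i| := by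
        simp [dsort_apply]
    _ ≤ sortedProdSum #((Iic t).map (sortPerm w).toEmbedding) x y :=
        sum_abs_Theta_sub_mulVec_le x y t.pos _
    _ = ∑ s ∈ Iic t, dsort x s * dsort y s := by
        rw [sortedProdSum, card_map, Fin.card_Iic]
        refine sum_congr (Finset.ext fun s => ?_) fun _ _ => rfl
        rw [mem_filter, mem_Iic, Fin.le_iff_val_le_val]
        simp only [mem_univ, true_and]
        omega

end

theorem symmetric_norm_theta_bound_general {n : ℕ} (N : (Fin n → ℝ) → ℝ)
    (hN_add : ∀ a b, N (a + b) ≤ N a + N b)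
    (hN_smul : ∀ (c : ℝ) a, N (c • a) = |c| * N a)
    (hN_perm : ∀ (σ : Equiv.Perm (Fin n)) a, N (a ∘ σ) = N a)
    (hN_sign : ∀ (ε a : Fin n → ℝ), (∀ i, ε i = 1 ∨ ε i = -1) →
      N (fun i => ε i * a i) = N a)
    (x y : Fin n → ℝ) :
    N ((Theta x - Matrix.of fun _ j => x j / n).mulVec y) ≤
      N (fun i => dsort x i * dsort y i) :=
  le_of_sum_Iic_dsort_le hN_add hN_smul hN_perm hN_sign (sum_Iic_dsort_Theta_sub_mulVec_le x y)

/-- Lemma 3: for any symmetric norm `N` on `ℝⁿ`,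
`‖(Θ_x − n⁻¹ 𝟙⊗x) y‖ ≤ ‖ |x|^↓ ⊙ |y|^↓ ‖`. -/
theorem symmetric_norm_theta_bound {n : ℕ} (N : (Fin n → ℝ) → ℝ)
    (hN_add : ∀ a b, N (a + b) ≤ N a + N b)
    (hN_smul : ∀ (c : ℝ) a, N (c • a) = |c| * N a)
    (hN_def : ∀ a, N a = 0 → a = 0)
    (hN_perm : ∀ (σ : Equiv.Perm (Fin n)) a, N (a ∘ σ) = N a)
    (hN_sign : ∀ (ε a : Fin n → ℝ), (∀ i, ε i = 1 ∨ ε i = -1) →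
      N (fun i => ε i * a i) = N a)
    (x y : Fin n → ℝ) :
    N ((Theta x - Matrix.of fun _ j => x j / n).mulVec y) ≤
      N (fun i => dsort x i * dsort y i) :=
  symmetric_norm_theta_bound_general N hN_add hN_smul hN_perm hN_sign x y
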